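/- Let U, T be α-Hölder continuous periodic potentials on T^d, R ∈ N*, and let S_R U(x) = U(Rx). Then for any y ∈ T^d, writing Θ_y T(x) = T(x+y), one has e^{-4‖T‖_α/R^α} D(S_R U + T) ≤ D(S_R U + Θ_y T) ≤ e^{4‖T‖_α/R^α} D(S_R U + T) in the sense of quadratic forms; i.e., a translation of the large scale relative to the small scale changes the two-scale effective diffusivity at most by a factor e^{4‖T‖_α/R^α}. -/

import Mathlib

open MeasureTheory Real Filter

noncomputable section

/-- The unit cube, a fundamental domain of the torus `T^d = R^d/Z^d`. -/
def unitCube (d : ℕ) : Set (Fin d → ℝ) := Set.univ.pi fun _ => Set.Ico (0:ℝ) 1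

/-- `Z^d`-periodicity of a function on `R^d`. -/
def Per (d : ℕ) (U : (Fin d → ℝ) → ℝ) : Prop :=
  ∀ (x : Fin d → ℝ) (z : Fin d → ℤ), U (x + fun i => (z i : ℝ)) = U x

/-- `i`-th partial derivative. -/
def pd (d : ℕ) (f : (Fin d → ℝ) → ℝ) (i : Fin d) (x : Fin d → ℝ) : ℝ :=
  fderiv ℝ f x (Pi.single i 1)

/-- The effective diffusivity quadratic form
`^t l D(U) l = inf_{f ∈ C^∞(T^d)} ∫ |l - ∇f|² m_U(dx)`,
with `m_U(dx) = e^{-2U} dx / ∫ e^{-2U}`. -/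
def effDiff (d : ℕ) (U : (Fin d → ℝ) → ℝ) (l : Fin d → ℝ) : ℝ :=
  ⨅ f : {f : (Fin d → ℝ) → ℝ // ContDiff ℝ (⊤ : ℕ∞) f ∧ Per d f},
    (∫ x in unitCube d, (∑ i, (l i - pd d f.1 i x)^2) * exp (-2 * U x)) /
      ∫ x in unitCube d, exp (-2 * U x)


section Aux
open Pointwise

/-! ### auxiliary lemmas -/

instance instIndexNonempty (d : ℕ) :
    Nonempty {f : (Fin d → ℝ) → ℝ // ContDiff ℝ (⊤ : ℕ∞) f ∧ Per d f} :=
  ⟨⟨fun _ => 0, contDiff_const, fun _ _ => rfl⟩⟩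

lemma measurableSet_unitCube (d : ℕ) : MeasurableSet (unitCube d) :=
  MeasurableSet.univ_pi fun _ => measurableSet_Ico

lemma volume_unitCube (d : ℕ) : volume (unitCube d) = 1 := by
  simp [unitCube, volume_pi_pi, Real.volume_Ico]

lemma integrableOn_unitCube (d : ℕ) {f : (Fin d → ℝ) → ℝ} (hf : Continuous f) :
    IntegrableOn f (unitCube d) volume := by
  have hsub : unitCube d ⊆ Set.univ.pi fun _ => Set.Icc (0:ℝ) 1 :=
    Set.pi_mono fun i _ => Set.Ico_subset_Icc_self
  exact (hf.continuousOn.integrableOn_compact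
    (isCompact_univ_pi fun _ => isCompact_Icc)).mono_set hsub

lemma continuous_of_holder {d : ℕ} {α K : ℝ} (hα : 0 < α) {U : (Fin d → ℝ) → ℝ}
    (h : ∀ x y, |U x - U y| ≤ K * ‖x - y‖ ^ α) : Continuous U := by
  rw [continuous_iff_continuousAt]
  intro x₀
  have hg : Tendsto (fun x : Fin d → ℝ => |K| * ‖x - x₀‖ ^ α) (nhds x₀) (nhds 0) := by
    have h1 : Tendsto (fun x : Fin d → ℝ => ‖x - x₀‖) (nhds x₀) (nhds 0) := by
      have := ((continuous_id.sub (continuous_const (y := x₀))).norm).tendsto x₀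
      simpa using this
    have h2 : ContinuousAt (fun t : ℝ => t ^ α) 0 :=
      Real.continuousAt_rpow_const 0 α (Or.inr hα.le)
    have h3 : Tendsto (fun x : Fin d → ℝ => ‖x - x₀‖ ^ α) (nhds x₀) (nhds 0) := by
      have := h2.tendsto.comp h1
      simpa [Function.comp_def, Real.zero_rpow hα.ne'] using this
    have := h3.const_mul |K|
    simpa using this
  have hU0 : Tendsto (fun x => U x - U x₀) (nhds x₀) (nhds 0) := by
    apply squeeze_zero_norm _ hg
    intro x
    calc ‖U x - U x₀‖ = |U x - U x₀| := rfl
      _ ≤ K * ‖x - x₀‖ ^ α := h x x₀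
      _ ≤ |K| * ‖x - x₀‖ ^ α := by
          apply mul_le_mul_of_nonneg_right (le_abs_self K)
          exact Real.rpow_nonneg (norm_nonneg _) α
  have := hU0.add (tendsto_const_nhds (x := U x₀))
  have h' : Tendsto U (nhds x₀) (nhds (U x₀)) := by simpa using this
  exact h'

lemma Z_pos (d : ℕ) {V : (Fin d → ℝ) → ℝ} (hV : Continuous V) :
    0 < ∫ x in unitCube d, exp (-2 * V x) := by
  rw [setIntegral_pos_iff_support_of_nonneg_ae
    (Filter.Eventually.of_forall fun x => (Real.exp_pos _).le)
    (integrableOn_unitCube d (by fun_prop))]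
  have hsupp : Function.support (fun x : Fin d → ℝ => exp (-2 * V x)) = Set.univ := by
    ext x; simp [Function.support, Real.exp_ne_zero]
  rw [hsupp, Set.univ_inter, volume_unitCube]
  norm_num

lemma pd_continuous {d : ℕ} {f : (Fin d → ℝ) → ℝ} (hf : ContDiff ℝ (⊤ : ℕ∞) f) (i : Fin d) :
    Continuous (pd d f i) :=
  (hf.continuous_fderiv (by simp)).clm_apply continuous_const

lemma num_continuous {d : ℕ} {V f : (Fin d → ℝ) → ℝ} (hV : Continuous V)
    (hf : ContDiff ℝ (⊤ : ℕ∞) f) (l : Fin d → ℝ) :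
    Continuous (fun x => (∑ i, (l i - pd d f i x)^2) * exp (-2 * V x)) := by
  apply Continuous.mul
  · exact continuous_finset_sum _ fun i _ => ((continuous_const.sub (pd_continuous hf i)).pow 2)
  · fun_prop

lemma term_nonneg (d : ℕ) (V f : (Fin d → ℝ) → ℝ) (l : Fin d → ℝ) :
    0 ≤ (∫ x in unitCube d, (∑ i, (l i - pd d f i x)^2) * exp (-2 * V x)) /
      ∫ x in unitCube d, exp (-2 * V x) := by
  apply div_nonneg
  · exact setIntegral_nonneg (measurableSet_unitCube d) fun x _ =>
      mul_nonneg (Finset.sum_nonneg fun i _ => sq_nonneg _) (Real.exp_pos _).le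
  · exact setIntegral_nonneg (measurableSet_unitCube d) fun x _ => (Real.exp_pos _).le

lemma bddBelow_terms (d : ℕ) (V : (Fin d → ℝ) → ℝ) (l : Fin d → ℝ) :
    BddBelow (Set.range fun f : {f : (Fin d → ℝ) → ℝ // ContDiff ℝ (⊤ : ℕ∞) f ∧ Per d f} =>
      (∫ x in unitCube d, (∑ i, (l i - pd d f.1 i x)^2) * exp (-2 * V x)) /
      ∫ x in unitCube d, exp (-2 * V x)) := by
  refine ⟨0, ?_⟩
  rintro _ ⟨f, rfl⟩
  exact term_nonneg d V f.1 l

/-- Key comparison lemma: potentials uniformly `ε`-close have comparable diffusivities. -/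
lemma effDiff_le_of_close (d : ℕ) {V W : (Fin d → ℝ) → ℝ} (hV : Continuous V)
    (hW : Continuous W) (ε : ℝ) (h : ∀ x, |V x - W x| ≤ ε) (l : Fin d → ℝ) :
    effDiff d V l ≤ exp (4 * ε) * effDiff d W l := by
  have hZV : 0 < ∫ x in unitCube d, exp (-2 * V x) := Z_pos d hV
  have hZW : 0 < ∫ x in unitCube d, exp (-2 * W x) := Z_pos d hW
  set ZV := ∫ x in unitCube d, exp (-2 * V x)
  set ZW := ∫ x in unitCube d, exp (-2 * W x)
  -- denominator comparison : ZW ≤ exp (2ε) * ZV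
  have hZ : ZW ≤ exp (2 * ε) * ZV := by
    have : ∫ x in unitCube d, exp (2 * ε) * exp (-2 * V x)
        = exp (2 * ε) * ZV := integral_const_mul _ _
    rw [← this]
    apply setIntegral_mono_on (integrableOn_unitCube d (by fun_prop))
      (integrableOn_unitCube d (by fun_prop)) (measurableSet_unitCube d)
    intro x _
    rw [← Real.exp_add]
    apply Real.exp_le_exp.mpr
    have := (abs_le.mp (h x)).2
    linarith
  have key : ∀ f : {f : (Fin d → ℝ) → ℝ // ContDiff ℝ (⊤ : ℕ∞) f ∧ Per d f},
      (∫ x in unitCube d, (∑ i, (l i - pd d f.1 i x)^2) * exp (-2 * V x)) / ZV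
      ≤ exp (4 * ε) *
        ((∫ x in unitCube d, (∑ i, (l i - pd d f.1 i x)^2) * exp (-2 * W x)) / ZW) := by
    intro f
    set NV := ∫ x in unitCube d, (∑ i, (l i - pd d f.1 i x)^2) * exp (-2 * V x)
    set NW := ∫ x in unitCube d, (∑ i, (l i - pd d f.1 i x)^2) * exp (-2 * W x)
    have hNW : 0 ≤ NW := setIntegral_nonneg (measurableSet_unitCube d) fun x _ =>
      mul_nonneg (Finset.sum_nonneg fun i _ => sq_nonneg _) (Real.exp_pos _).le
    have hN : NV ≤ exp (2 * ε) * NW := by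
      have : ∫ x in unitCube d,
          exp (2 * ε) * ((∑ i, (l i - pd d f.1 i x)^2) * exp (-2 * W x))
          = exp (2 * ε) * NW := integral_const_mul _ _
      rw [← this]
      apply setIntegral_mono_on (integrableOn_unitCube d (num_continuous hV f.2.1 l))
        (integrableOn_unitCube d (continuous_const.mul (num_continuous hW f.2.1 l)))
        (measurableSet_unitCube d)
      intro x _
      simp only [Pi.mul_apply]
      rw [mul_comm (exp (2*ε)) _, mul_assoc, ← Real.exp_add]
      apply mul_le_mul_of_nonneg_left _ (Finset.sum_nonneg fun i _ => sq_nonneg _)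
      apply Real.exp_le_exp.mpr
      have := (abs_le.mp (h x)).1
      linarith
    calc NV / ZV ≤ (exp (2 * ε) * NW) / (exp (-(2 * ε)) * ZW) := by
          apply div_le_div₀ (by positivity) hN (by positivity)
          rw [Real.exp_neg]
          rw [inv_mul_le_iff₀ (Real.exp_pos _)]
          exact hZ
      _ = exp (4 * ε) * (NW / ZW) := by
          have h4 : exp (4 * ε) = exp (2 * ε) * exp (2 * ε) := by
            rw [← Real.exp_add]; ring_nf
          have he : exp (2 * ε) ≠ 0 := (Real.exp_pos _).ne'
          rw [h4, Real.exp_neg]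
          field_simp
  -- take infimum
  unfold effDiff
  rw [Real.mul_iInf_of_nonneg (Real.exp_nonneg _)]
  apply le_ciInf
  intro f
  calc (⨅ g : {f : (Fin d → ℝ) → ℝ // ContDiff ℝ (⊤ : ℕ∞) f ∧ Per d f},
      (∫ x in unitCube d, (∑ i, (l i - pd d g.1 i x)^2) * exp (-2 * V x)) / ZV)
      ≤ (∫ x in unitCube d, (∑ i, (l i - pd d f.1 i x)^2) * exp (-2 * V x)) / ZV :=
        ciInf_le (bddBelow_terms d V l) f
    _ ≤ exp (4 * ε) *
        ((∫ x in unitCube d, (∑ i, (l i - pd d f.1 i x)^2) * exp (-2 * W x)) / ZW) := key f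

/-! ### translation invariance -/

instance instVCC (d : ℕ) : VAddCommClass (Fin d → ℝ)
    (Submodule.span ℤ (Set.range (Pi.basisFun ℝ (Fin d)))) (Fin d → ℝ) :=
  ⟨fun a g x => by show a + (↑g + x) = ↑g + (a + x); ring⟩

instance instMV (d : ℕ) :
    MeasurableVAdd (Submodule.span ℤ (Set.range (Pi.basisFun ℝ (Fin d)))) (Fin d → ℝ) :=
  { measurable_const_vadd := fun c => (measurable_const_add (c : Fin d → ℝ))
    measurable_vadd_const := fun _ =>
    (measurable_subtype_coe.add measurable_const) }

instance instVIM (d : ℕ) :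
    VAddInvariantMeasure (Submodule.span ℤ (Set.range (Pi.basisFun ℝ (Fin d)))) (Fin d → ℝ)
      volume :=
  ⟨fun c s _ => measure_preimage_add volume (c : Fin d → ℝ) s⟩

theorem integral_unitCube_translate (d : ℕ) (F : (Fin d → ℝ) → ℝ) (hper : Per d F)
    (c : Fin d → ℝ) : ∫ x in unitCube d, F (x + c) = ∫ x in unitCube d, F x := by
  set L := Submodule.span ℤ (Set.range (Pi.basisFun ℝ (Fin d))) with hL
  have hfd : IsAddFundamentalDomain L (unitCube d) volume := by
    have := ZSpan.isAddFundamentalDomain (Pi.basisFun ℝ (Fin d)) (volume : Measure (Fin d → ℝ))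
    convert this using 1
    ext x; simp [unitCube, ZSpan.fundamentalDomain]
  have hfd2 : IsAddFundamentalDomain L (c +ᵥ unitCube d) volume := hfd.vadd_of_comm c
  have hinv : ∀ (g : L) (x : Fin d → ℝ), F (g +ᵥ x) = F x := by
    rintro ⟨g, hg⟩ x
    show F (g + x) = F x
    have h := (Module.Basis.mem_span_iff_repr_mem ℤ (Pi.basisFun ℝ (Fin d)) g).mp hg
    have hz : ∀ i, ((h i).choose : ℝ) = g i := fun i => by simpa using (h i).choose_spec
    have heq : g + x = x + fun i => (((h i).choose : ℤ) : ℝ) := by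
      funext i
      have hzi : (fun i => (((h i).choose : ℤ) : ℝ)) i = g i := hz i
      show g i + x i = x i + _
      rw [hzi]; ring
    rw [heq, hper]
  have hset : c +ᵥ unitCube d = (fun x => x + c) '' unitCube d := by
    ext x; rw [Set.mem_vadd_set]
    constructor
    · rintro ⟨a, ha, rfl⟩; exact ⟨a, ha, (add_comm a c : (fun x => x + c) a = c +ᵥ a)⟩
    · rintro ⟨a, ha, rfl⟩; exact ⟨a, ha, (add_comm c a : c +ᵥ a = (fun x => x + c) a)⟩
  calc ∫ x in unitCube d, F (x + c)
      = ∫ x in c +ᵥ unitCube d, F x := by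
        rw [hset, (measurePreserving_add_right volume c).setIntegral_image_emb
          (measurableEmbedding_addRight c) F (unitCube d)]
    _ = ∫ x in unitCube d, F x := hfd2.setIntegral_eq hfd hinv

lemma pd_comp_add_const {d : ℕ} {f : (Fin d → ℝ) → ℝ} (hf : ContDiff ℝ (⊤ : ℕ∞) f)
    (c : Fin d → ℝ) (i : Fin d) (x : Fin d → ℝ) :
    pd d (fun y => f (y + c)) i x = pd d f i (x + c) := by
  unfold pd
  have h1 : HasFDerivAt (fun y : Fin d → ℝ => y + c)
      (ContinuousLinearMap.id ℝ (Fin d → ℝ)) x := (hasFDerivAt_id x).add_const c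
  have h2 : HasFDerivAt f (fderiv ℝ f (x + c)) (x + c) :=
    (hf.differentiable (by simp) (x + c)).hasFDerivAt
  have h3 := h2.comp x h1
  rw [show (fun y => f (y + c)) = (f ∘ fun y => y + c) from rfl, h3.fderiv]
  simp

lemma per_comp_add_const {d : ℕ} {f : (Fin d → ℝ) → ℝ} (hf : Per d f) (c : Fin d → ℝ) :
    Per d (fun y => f (y + c)) := by
  intro x z
  have : (x + fun i => ((z i : ℤ) : ℝ)) + c = (x + c) + fun i => ((z i : ℤ) : ℝ) := by
    funext i; show x i + _ + c i = x i + c i + _; ring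
  show f ((x + fun i => ((z i : ℤ) : ℝ)) + c) = f (x + c)
  rw [this, hf (x + c) z]

lemma pd_per {d : ℕ} {f : (Fin d → ℝ) → ℝ} (hf : ContDiff ℝ (⊤ : ℕ∞) f) (hper : Per d f) (i : Fin d) :
    Per d (pd d f i) := by
  intro x z
  have heq : (fun y => f (y + fun i => ((z i : ℤ) : ℝ))) = f := funext fun y => hper y z
  rw [← pd_comp_add_const hf (fun i => ((z i : ℤ) : ℝ)) i x, heq]

lemma contDiff_comp_add_const {d : ℕ} {f : (Fin d → ℝ) → ℝ} (hf : ContDiff ℝ (⊤ : ℕ∞) f)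
    (c : Fin d → ℝ) : ContDiff ℝ (⊤ : ℕ∞) (fun y => f (y + c)) :=
  hf.comp (contDiff_id.add contDiff_const)

lemma effDiff_translate_le (d : ℕ) {W : (Fin d → ℝ) → ℝ} (hW : Continuous W)
    (hWper : Per d W) (c : Fin d → ℝ) (l : Fin d → ℝ) :
    effDiff d (fun x => W (x + c)) l ≤ effDiff d W l := by
  unfold effDiff
  apply le_ciInf
  intro f
  set g : {f : (Fin d → ℝ) → ℝ // ContDiff ℝ (⊤ : ℕ∞) f ∧ Per d f} :=
    ⟨fun y => f.1 (y + c), contDiff_comp_add_const f.2.1 c, per_comp_add_const f.2.2 c⟩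
  have hterm :
      (∫ x in unitCube d, (∑ i, (l i - pd d g.1 i x)^2) * exp (-2 * W (x + c))) /
        (∫ x in unitCube d, exp (-2 * W (x + c)))
      = (∫ x in unitCube d, (∑ i, (l i - pd d f.1 i x)^2) * exp (-2 * W x)) /
        (∫ x in unitCube d, exp (-2 * W x)) := by
    have hnum :
        (∫ x in unitCube d, (∑ i, (l i - pd d g.1 i x)^2) * exp (-2 * W (x + c)))
        = ∫ x in unitCube d, (∑ i, (l i - pd d f.1 i x)^2) * exp (-2 * W x) := by
      have hG : Per d (fun x => (∑ i, (l i - pd d f.1 i x)^2) * exp (-2 * W x)) := by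
        intro x z
        simp only []
        rw [hWper x z]
        congr 1
        apply Finset.sum_congr rfl
        intro i _
        rw [pd_per f.2.1 f.2.2 i x z]
      have := integral_unitCube_translate d
        (fun x => (∑ i, (l i - pd d f.1 i x)^2) * exp (-2 * W x)) hG c
      rw [← this]
      apply setIntegral_congr_fun (measurableSet_unitCube d)
      intro x _
      simp only []
      congr 1
      apply Finset.sum_congr rfl
      intro i _
      rw [pd_comp_add_const f.2.1 c i x]
    have hden : (∫ x in unitCube d, exp (-2 * W (x + c)))
        = ∫ x in unitCube d, exp (-2 * W x) := by
      have hH : Per d (fun x => exp (-2 * W x)) := by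
        intro x z; simp only []; rw [hWper x z]
      exact integral_unitCube_translate d (fun x => exp (-2 * W x)) hH c
    rw [hnum, hden]
  calc (⨅ h : {f : (Fin d → ℝ) → ℝ // ContDiff ℝ (⊤ : ℕ∞) f ∧ Per d f},
      (∫ x in unitCube d, (∑ i, (l i - pd d h.1 i x)^2) * exp (-2 * W (x + c))) /
        (∫ x in unitCube d, exp (-2 * W (x + c))))
      ≤ (∫ x in unitCube d, (∑ i, (l i - pd d g.1 i x)^2) * exp (-2 * W (x + c))) /
        (∫ x in unitCube d, exp (-2 * W (x + c))) :=
        ciInf_le (bddBelow_terms d (fun x => W (x + c)) l) g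
    _ = _ := hterm

lemma effDiff_translate (d : ℕ) {W : (Fin d → ℝ) → ℝ} (hW : Continuous W)
    (hWper : Per d W) (c : Fin d → ℝ) (l : Fin d → ℝ) :
    effDiff d (fun x => W (x + c)) l = effDiff d W l := by
  apply le_antisymm (effDiff_translate_le d hW hWper c l)
  have h2 := effDiff_translate_le d (W := fun x => W (x + c))
    (hW.comp (continuous_id.add continuous_const)) (per_comp_add_const hWper c) (-c) l
  have : (fun x => W ((x + -c) + c)) = W := by
    funext x; congr 1; funext i
    simp only [Pi.add_apply, Pi.neg_apply]; ring
  simpa [this] using h2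


end Aux

/-- Translating the large scale relative to the small scale changes the two-scale
effective diffusivity at most by a factor exp(4 ‖T‖_α / R^α). -/
theorem effDiff_two_scale_translation (d : ℕ) (α : ℝ) (hα : 0 < α) (hα1 : α ≤ 1)
    (U T : (Fin d → ℝ) → ℝ) (hUper : Per d U) (hTper : Per d T)
    (KU KT : ℝ)
    (hUhol : ∀ x y, |U x - U y| ≤ KU * ‖x - y‖ ^ α)
    (hThol : ∀ x y, |T x - T y| ≤ KT * ‖x - y‖ ^ α)
    (R : ℕ) (hR : 0 < R) (y : Fin d → ℝ) (l : Fin d → ℝ) :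
    exp (-(4 * KT / (R : ℝ) ^ α)) *
        effDiff d (fun x => U ((R : ℝ) • x) + T x) l
      ≤ effDiff d (fun x => U ((R : ℝ) • x) + T (x + y)) l ∧
    effDiff d (fun x => U ((R : ℝ) • x) + T (x + y)) l
      ≤ exp (4 * KT / (R : ℝ) ^ α) *
        effDiff d (fun x => U ((R : ℝ) • x) + T x) l := by
  rcases Nat.eq_zero_or_pos d with hd | hd
  · subst hd
    have hzero : ∀ Vv : (Fin 0 → ℝ) → ℝ, effDiff 0 Vv l = 0 := by
      intro Vv
      unfold effDiff
      simp [Finset.univ_eq_empty, ciInf_const]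
    rw [hzero, hzero]
    simp
  -- main case `0 < d`
  have hRpos : (0:ℝ) < (R:ℝ) := by exact_mod_cast hR
  have hR0 : ((R:ℝ)) ≠ 0 := hRpos.ne'
  have hKT : 0 ≤ KT := by
    obtain ⟨i0⟩ : Nonempty (Fin d) := ⟨⟨0, hd⟩⟩
    have h1 := hThol 0 (Pi.single i0 1)
    have h2 : ‖(0 : Fin d → ℝ) - Pi.single i0 1‖ = 1 := by
      rw [zero_sub, norm_neg]
      simp [Pi.norm_single]
    rw [h2, Real.one_rpow, mul_one] at h1
    exact le_trans (abs_nonneg _) h1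
  have hUc : Continuous U := continuous_of_holder hα hUhol
  have hTc : Continuous T := continuous_of_holder hα hThol
  set SU : (Fin d → ℝ) → ℝ := fun x => U ((R : ℝ) • x) with hSU
  have hSUc : Continuous SU := hUc.comp (continuous_id.const_smul ((R:ℝ)))
  have hSUper : Per d SU := by
    intro x z
    show U ((R:ℝ) • (x + fun i => ((z i : ℤ) : ℝ))) = U ((R:ℝ) • x)
    have heq : (R:ℝ) • (x + fun i => ((z i : ℤ) : ℝ))
        = (R:ℝ) • x + fun i => (((R * z i : ℤ) : ℤ) : ℝ) := by
      funext i
      simp only [Pi.smul_apply, Pi.add_apply, smul_eq_mul]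
      push_cast
      ring
    rw [heq, hUper]
  set W : (Fin d → ℝ) → ℝ := fun x => SU x + T x with hW
  set V : (Fin d → ℝ) → ℝ := fun x => SU x + T (x + y) with hV
  have hWc : Continuous W := hSUc.add hTc
  have hVc : Continuous V := hSUc.add (hTc.comp (continuous_id.add continuous_const))
  have hWper : Per d W := by
    intro x z
    show SU (x + fun i => ((z i : ℤ) : ℝ)) + T (x + fun i => ((z i : ℤ) : ℝ)) = SU x + T x
    rw [hSUper x z, hTper x z]
  set y' : Fin d → ℝ := fun i => ((⌊(R:ℝ) * y i⌋ : ℤ) : ℝ) / R with hy'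
  set V₂ : (Fin d → ℝ) → ℝ := fun x => W (x + y') with hV₂
  have hV₂c : Continuous V₂ := hWc.comp (continuous_id.add continuous_const)
  have htrans : ∀ x, V₂ x = SU x + T (x + y') := by
    intro x
    show SU (x + y') + T (x + y') = SU x + T (x + y')
    congr 1
    show U ((R:ℝ) • (x + y')) = U ((R:ℝ) • x)
    have heq : (R:ℝ) • (x + y') = (R:ℝ) • x + fun i => ((⌊(R:ℝ) * y i⌋ : ℤ) : ℝ) := by
      funext i
      simp only [Pi.smul_apply, Pi.add_apply, smul_eq_mul, hy']
      field_simp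
    rw [heq, hUper]
  set ε : ℝ := KT * ((R:ℝ) ^ α)⁻¹ with hε
  have hclose : ∀ x, |V x - V₂ x| ≤ ε := by
    intro x
    have hdiff : V x - V₂ x = T (x + y) - T (x + y') := by
      rw [htrans x]
      show SU x + T (x + y) - (SU x + T (x + y')) = _
      ring
    rw [hdiff]
    have hyy : ‖y - y'‖ ≤ (R:ℝ)⁻¹ := by
      rw [pi_norm_le_iff_of_nonneg (by positivity)]
      intro i
      have hfr : y i - y' i = Int.fract ((R:ℝ) * y i) / R := by
        simp only [hy']
        field_simp
        exact Int.self_sub_floor (y i * (R:ℝ))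
      show ‖y i - y' i‖ ≤ (R:ℝ)⁻¹
      rw [Real.norm_eq_abs, hfr,
        abs_of_nonneg (div_nonneg (Int.fract_nonneg _) hRpos.le), ← one_div]
      gcongr
      exact (Int.fract_lt_one _).le
    have hsub : (x + y) - (x + y') = y - y' := by funext i; simp
    calc |T (x + y) - T (x + y')| ≤ KT * ‖(x + y) - (x + y')‖ ^ α := hThol _ _
      _ = KT * ‖y - y'‖ ^ α := by rw [hsub]
      _ ≤ KT * ((R:ℝ)⁻¹) ^ α := by
          apply mul_le_mul_of_nonneg_left _ hKT
          exact Real.rpow_le_rpow (norm_nonneg _) hyy hα.le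
      _ = ε := by rw [hε, Real.inv_rpow hRpos.le]
  have hclose' : ∀ x, |V₂ x - V x| ≤ ε := fun x => by rw [abs_sub_comm]; exact hclose x
  have h1 : effDiff d V l ≤ exp (4 * ε) * effDiff d V₂ l :=
    effDiff_le_of_close d hVc hV₂c ε hclose l
  have h2 : effDiff d V₂ l ≤ exp (4 * ε) * effDiff d V l :=
    effDiff_le_of_close d hV₂c hVc ε hclose' l
  have h3 : effDiff d V₂ l = effDiff d W l := effDiff_translate d hWc hWper y' l
  have hεeq : 4 * KT / (R:ℝ) ^ α = 4 * ε := by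
    rw [hε, div_eq_mul_inv]; ring
  constructor
  · rw [hεeq, Real.exp_neg, inv_mul_le_iff₀ (Real.exp_pos _)]
    rw [h3] at h2
    exact h2
  · rw [hεeq, ← h3]
    exact h1
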